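/- arXiv:2306.03440 — 2 statements merged into one kernel-verified Lean document; each statement's English description precedes it below -/
import Mathlib

section
/- Let K ≥ 1, N ≥ 1 and let h_{k,i} ∈ ℝ^p for k = 1,…,K and i = 1,…,N be feature vectors whose global mean μ_G is zero. Define the mean-squared-error linear probing loss L(W,b) = (1/(2KN))·∑_{k=1}^K ∑_{i=1}^N ‖W h_{k,i} + b − e_k‖² over W ∈ ℝ^{K×p} and b ∈ ℝ^K, where e_k is the k-th standard basis vector of ℝ^K. Then the pair W* = (1/K)·(∑_{k=1}^K e_k μ_k^T)·Σ_T† and b* = (1/K)·𝟙_K (the vector with all entries 1/K) is a global minimizer of L, i.e., L(W*,b*) ≤ L(W,b) for all W ∈ ℝ^{K×p} and b ∈ ℝ^K. -/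
/-!
The loss splits over the `K` output coordinates into independent affine least-squares problems
in the features `h_{k,i}`, so it suffices that row `j` of `(W*, b*)` satisfies the normal
equations. The residuals sum to zero because the features are centred. They are orthogonal to the
features because `Σ_T (Σ_T†)ᵀ μ_j = Σ_T† Σ_T μ_j = μ_j`: the Penrose conditions make `Σ_T† Σ_T`
the orthogonal projection onto `(ker Σ_T)ᗮ`, and `μ_j` lies there since `ker Σ_T` is orthogonal to
every `h_{k,i}` when `μ_G = 0`.
-/

open Matrix Finset

noncomputable section

/-- The `k`-th class mean `μ_k = (1/N) ∑_i h_{k,i}`. -/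
def classMean {K N p : ℕ} (H : Fin K → Fin N → (Fin p → ℝ)) (k : Fin K) : Fin p → ℝ :=
  (N : ℝ)⁻¹ • ∑ i, H k i

/-- The global mean `μ_G = (1/(KN)) ∑_{k,i} h_{k,i}`. -/
def globalMean {K N p : ℕ} (H : Fin K → Fin N → (Fin p → ℝ)) : Fin p → ℝ :=
  ((K : ℝ) * (N : ℝ))⁻¹ • ∑ k, ∑ i, H k i

/-- Within-class covariance `Σ_W = (1/(KN)) ∑_{k,i} (h_{k,i} − μ_k)(h_{k,i} − μ_k)ᵀ`. -/
def SigmaW {K N p : ℕ} (H : Fin K → Fin N → (Fin p → ℝ)) : Matrix (Fin p) (Fin p) ℝ :=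
  ((K : ℝ) * (N : ℝ))⁻¹ •
    ∑ k, ∑ i, vecMulVec (H k i - classMean H k) (H k i - classMean H k)

/-- Between-class covariance `Σ_B = (1/K) ∑_k (μ_k − μ_G)(μ_k − μ_G)ᵀ`. -/
def SigmaB {K N p : ℕ} (H : Fin K → Fin N → (Fin p → ℝ)) : Matrix (Fin p) (Fin p) ℝ :=
  (K : ℝ)⁻¹ • ∑ k, vecMulVec (classMean H k - globalMean H) (classMean H k - globalMean H)

/-- Overall covariance `Σ_T = (1/(KN)) ∑_{k,i} (h_{k,i} − μ_G)(h_{k,i} − μ_G)ᵀ`. -/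
def SigmaT {K N p : ℕ} (H : Fin K → Fin N → (Fin p → ℝ)) : Matrix (Fin p) (Fin p) ℝ :=
  ((K : ℝ) * (N : ℝ))⁻¹ •
    ∑ k, ∑ i, vecMulVec (H k i - globalMean H) (H k i - globalMean H)
/-- `Ad` is the Moore–Penrose pseudoinverse of `A`: the four Penrose conditions. -/
def IsMoorePenrose {p : ℕ} (A Ad : Matrix (Fin p) (Fin p) ℝ) : Prop :=
  A * Ad * A = A ∧ Ad * A * Ad = Ad ∧ (A * Ad)ᵀ = A * Ad ∧ (Ad * A)ᵀ = Ad * A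

/-- MSE linear probing loss `L(W,b) = (1/(2KN)) ∑_{k,i} ‖W h_{k,i} + b − e_k‖²`. -/
def mseLoss {K N p : ℕ} (H : Fin K → Fin N → (Fin p → ℝ))
    (W : Matrix (Fin K) (Fin p) ℝ) (b : Fin K → ℝ) : ℝ :=
  (2 * (K : ℝ) * (N : ℝ))⁻¹ *
    ∑ k, ∑ i, ∑ j, ((W.mulVec (H k i) + b - Pi.single k 1 : Fin K → ℝ) j) ^ 2

section

variable {ι n : Type*} [Fintype ι] [Fintype n]

theorem sum_sq_le_sum_add_sq_of_sum_mul_eq_zero (f g : ι → ℝ) (h : ∑ i, f i * g i = 0) :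
    ∑ i, f i ^ 2 ≤ ∑ i, (f i + g i) ^ 2 :=
  calc ∑ i, f i ^ 2 ≤ ∑ i, f i ^ 2 + 2 * ∑ i, f i * g i + ∑ i, g i ^ 2 := by
        rw [h]; simpa using sum_nonneg fun i _ => sq_nonneg (g i)
    _ = ∑ i, (f i + g i) ^ 2 := by
        simp only [mul_sum, ← sum_add_distrib]; exact sum_congr rfl fun i _ => by ring

theorem sum_sq_residual_le_of_normal_equations (x : ι → n → ℝ) (y : ι → ℝ) (w₀ : n → ℝ)
    (β₀ : ℝ) (h₁ : ∑ i, (w₀ ⬝ᵥ x i + β₀ - y i) = 0)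
    (h₂ : ∑ i, (w₀ ⬝ᵥ x i + β₀ - y i) • x i = 0) (w : n → ℝ) (β : ℝ) :
    ∑ i, (w₀ ⬝ᵥ x i + β₀ - y i) ^ 2 ≤ ∑ i, (w ⬝ᵥ x i + β - y i) ^ 2 := by
  have horth : ∑ i, (w₀ ⬝ᵥ x i + β₀ - y i) * ((w - w₀) ⬝ᵥ x i + (β - β₀)) = 0 := by
    calc _ = (w - w₀) ⬝ᵥ ∑ i, (w₀ ⬝ᵥ x i + β₀ - y i) • x i
            + (β - β₀) * ∑ i, (w₀ ⬝ᵥ x i + β₀ - y i) := by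
          simp only [dotProduct_sum, dotProduct_smul, smul_eq_mul, mul_sum, ← sum_add_distrib]
          exact sum_congr rfl fun i _ => by ring
      _ = 0 := by rw [h₁, h₂, dotProduct_zero, mul_zero, add_zero]
  convert sum_sq_le_sum_add_sq_of_sum_mul_eq_zero _ _ horth using 3
  rw [sub_dotProduct]; ring

theorem dotProduct_mulVec_sum_vecMulVec (x : ι → n → ℝ) (u v : n → ℝ) :
    u ⬝ᵥ (∑ i, vecMulVec (x i) (x i)) *ᵥ v = ∑ i, (u ⬝ᵥ x i) * (x i ⬝ᵥ v) := by
  simp only [sum_mulVec, vecMulVec_mulVec, dotProduct_sum]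
  exact sum_congr rfl fun i _ => by simp [dotProduct_smul, mul_comm]

theorem dotProduct_eq_zero_of_sum_vecMulVec_mulVec_eq_zero (x : ι → n → ℝ) {r : n → ℝ}
    (hr : (∑ i, vecMulVec (x i) (x i)) *ᵥ r = 0) (i : ι) : x i ⬝ᵥ r = 0 := by
  have hsq : ∑ i, (x i ⬝ᵥ r) ^ 2 = 0 := by
    rw [← dotProduct_zero r, ← hr, dotProduct_mulVec_sum_vecMulVec]
    exact sum_congr rfl fun i _ => by rw [dotProduct_comm r, sq]
  exact pow_eq_zero_iff two_ne_zero |>.mp <|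
    (sum_eq_zero_iff_of_nonneg fun i _ => sq_nonneg _).mp hsq i (mem_univ i)

end

theorem mul_mulVec_eq_self_of_forall_dotProduct_eq_zero {n : Type*} [Fintype n]
    {A Ad : Matrix n n ℝ} (hA : A * Ad * A = A) (hsymm : (Ad * A)ᵀ = Ad * A) {v : n → ℝ}
    (hv : ∀ r, A *ᵥ r = 0 → v ⬝ᵥ r = 0) : (Ad * A) *ᵥ v = v := by
  set r := v - (Ad * A) *ᵥ v
  have hr : A *ᵥ r = 0 := by
    rw [mulVec_sub, mulVec_mulVec, ← Matrix.mul_assoc, hA, sub_self]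
  have hproj : ((Ad * A) *ᵥ v) ⬝ᵥ r = 0 := by
    rw [dotProduct_comm, dotProduct_mulVec, ← mulVec_transpose, hsymm, ← mulVec_mulVec, hr,
      mulVec_zero, zero_dotProduct]
  have hrr : r ⬝ᵥ r = 0 :=
    calc r ⬝ᵥ r = v ⬝ᵥ r - ((Ad * A) *ᵥ v) ⬝ᵥ r := sub_dotProduct _ _ _
      _ = 0 := by rw [hv r hr, hproj, sub_zero]
  exact (sub_eq_zero.mp (dotProduct_self_eq_zero.mp hrr)).symm

theorem sum_of_single_mul_eq_of {m n : Type*} [Fintype m] [DecidableEq m] (v : m → n → ℝ) :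
    ∑ k, Matrix.of (fun a j => (Pi.single k 1 : m → ℝ) a * v k j) = Matrix.of v := by
  ext a j
  simp [Matrix.sum_apply, Pi.single_apply]

section Features

variable {K N p : ℕ} (H : Fin K → Fin N → (Fin p → ℝ))

theorem sum_eq_smul_classMean (k : Fin K) : ∑ i, H k i = (N : ℝ) • classMean H k := by
  rcases Nat.eq_zero_or_pos N with rfl | hN
  · simp
  · rw [classMean, smul_inv_smul₀ (by positivity)]

theorem sum_sum_eq_zero_of_globalMean_eq_zero (hG : globalMean H = 0) :
    ∑ k, ∑ i, H k i = 0 := by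
  rcases Nat.eq_zero_or_pos K with rfl | hK
  · simp
  rcases Nat.eq_zero_or_pos N with rfl | hN
  · simp
  rwa [globalMean, smul_eq_zero, or_iff_right (by positivity)] at hG

theorem SigmaT_eq_of_globalMean_eq_zero (hG : globalMean H = 0) :
    SigmaT H = ((K : ℝ) * N)⁻¹ • ∑ k, ∑ i, vecMulVec (H k i) (H k i) := by
  simp only [SigmaT, hG, sub_zero]

theorem SigmaT_transpose : (SigmaT H)ᵀ = SigmaT H := by
  simp [SigmaT, transpose_sum]

theorem dotProduct_eq_zero_of_SigmaT_mulVec_eq_zero (hG : globalMean H = 0) {r : Fin p → ℝ}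
    (hr : SigmaT H *ᵥ r = 0) (k : Fin K) (i : Fin N) : H k i ⬝ᵥ r = 0 := by
  have hKN : ((K : ℝ) * N)⁻¹ ≠ 0 := by have := k.pos; have := i.pos; positivity
  rw [SigmaT_eq_of_globalMean_eq_zero H hG, smul_mulVec, smul_eq_zero, or_iff_right hKN,
    ← Fintype.sum_prod_type'] at hr
  exact dotProduct_eq_zero_of_sum_vecMulVec_mulVec_eq_zero (fun ki => H ki.1 ki.2) hr (k, i)

theorem SigmaT_mulVec_vecMul_classMean (hG : globalMean H = 0) {STd : Matrix (Fin p) (Fin p) ℝ}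
    (hSTd : IsMoorePenrose (SigmaT H) STd) (j : Fin K) :
    SigmaT H *ᵥ (classMean H j ᵥ* STd) = classMean H j := by
  rw [← SigmaT_transpose, mulVec_transpose, vecMul_vecMul, ← mulVec_transpose, hSTd.2.2.2]
  refine mul_mulVec_eq_self_of_forall_dotProduct_eq_zero hSTd.1 hSTd.2.2.2 fun r hr => ?_
  simp [classMean, smul_dotProduct, sum_dotProduct,
    dotProduct_eq_zero_of_SigmaT_mulVec_eq_zero H hG hr]

theorem sum_residual_eq_zero (hG : globalMean H = 0) (j : Fin K) (w : Fin p → ℝ) :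
    ∑ ki : Fin K × Fin N,
      (w ⬝ᵥ H ki.1 ki.2 + (K : ℝ)⁻¹ - (Pi.single ki.1 1 : Fin K → ℝ) j) = 0 := by
  have hK : (K : ℝ) ≠ 0 := by have := j.pos; positivity
  rw [Fintype.sum_prod_type]
  simp only [sum_add_distrib, sum_sub_distrib, ← dotProduct_sum,
    sum_sum_eq_zero_of_globalMean_eq_zero H hG, dotProduct_zero, sum_const, card_univ,
    Fintype.card_fin, nsmul_eq_mul, Pi.single_apply, mul_ite, mul_one, mul_zero, sum_ite_eq,
    mem_univ, if_true]
  field_simp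
  ring

theorem sum_residual_smul_eq_zero (hG : globalMean H = 0) {STd : Matrix (Fin p) (Fin p) ℝ}
    (hSTd : IsMoorePenrose (SigmaT H) STd) (j : Fin K) :
    ∑ ki : Fin K × Fin N, ((K : ℝ)⁻¹ • (classMean H j ᵥ* STd) ⬝ᵥ H ki.1 ki.2 + (K : ℝ)⁻¹
      - (Pi.single ki.1 1 : Fin K → ℝ) j) • H ki.1 ki.2 = 0 := by
  rcases eq_or_ne N 0 with rfl | hN
  · simp
  have hK : (K : ℝ) ≠ 0 := by have := j.pos; positivity
  have hscatter :
      ∑ k, ∑ i, (classMean H j ᵥ* STd ⬝ᵥ H k i) • H k i = ((K : ℝ) * N) • classMean H j := by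
    have hfix := SigmaT_mulVec_vecMul_classMean H hG hSTd j
    rw [SigmaT_eq_of_globalMean_eq_zero H hG, smul_mulVec,
      inv_smul_eq_iff₀ (by positivity)] at hfix
    rw [← hfix]
    simp [sum_mulVec, vecMulVec_mulVec, dotProduct_comm]
  have hdelta : ∑ k, (Pi.single k 1 : Fin K → ℝ) j • ∑ i, H k i = (N : ℝ) • classMean H j := by
    simp [Pi.single_apply, sum_eq_smul_classMean]
  calc _ = (K : ℝ)⁻¹ • ∑ k, ∑ i, (classMean H j ᵥ* STd ⬝ᵥ H k i) • H k i
        + (K : ℝ)⁻¹ • ∑ k, ∑ i, H k i - ∑ k, (Pi.single k 1 : Fin K → ℝ) j • ∑ i, H k i := by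
        rw [Fintype.sum_prod_type]
        simp only [add_smul, sub_smul, sum_add_distrib, sum_sub_distrib, smul_sum,
          smul_dotProduct, smul_eq_mul, mul_smul]
    _ = 0 := by
      rw [hscatter, sum_sum_eq_zero_of_globalMean_eq_zero H hG, hdelta, smul_zero, add_zero,
        smul_smul, inv_mul_cancel_left₀ hK, sub_self]

theorem mseLoss_eq_sum_rows (W : Matrix (Fin K) (Fin p) ℝ) (b : Fin K → ℝ) :
    mseLoss H W b = (2 * (K : ℝ) * N)⁻¹ *
      ∑ j, ∑ ki : Fin K × Fin N,
        (W j ⬝ᵥ H ki.1 ki.2 + b j - (Pi.single ki.1 1 : Fin K → ℝ) j) ^ 2 := by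
  rw [mseLoss, ← Fintype.sum_prod_type', Finset.sum_comm]
  rfl

end Features

theorem mse_minimizer_general {K N p : ℕ}
    (H : Fin K → Fin N → (Fin p → ℝ)) (hG : globalMean H = 0)
    (STd : Matrix (Fin p) (Fin p) ℝ) (hSTd : IsMoorePenrose (SigmaT H) STd) :
    ∀ (W : Matrix (Fin K) (Fin p) ℝ) (b : Fin K → ℝ),
      mseLoss H
        ((K : ℝ)⁻¹ • ((∑ k, Matrix.of (fun (a : Fin K) (j : Fin p) =>
            (Pi.single k 1 : Fin K → ℝ) a * classMean H k j)) * STd))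
        (fun _ => (K : ℝ)⁻¹)
      ≤ mseLoss H W b := by
  intro W b
  rw [sum_of_single_mul_eq_of, mseLoss_eq_sum_rows, mseLoss_eq_sum_rows]
  refine mul_le_mul_of_nonneg_left (sum_le_sum fun j _ => ?_) (by positivity)
  exact sum_sq_residual_le_of_normal_equations _ _ _ _ (sum_residual_eq_zero H hG j _)
    (sum_residual_smul_eq_zero H hG hSTd j) (W j) (b j)

/-- **Explicit minimizer of the MSE linear probing loss.** Suppose the global mean is zero.
Then `W* = (1/K)(∑_k e_k μ_kᵀ) Σ_T†` together with `b* = (1/K)𝟙` is a global minimizer of the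
MSE linear probing loss. -/
theorem mse_minimizer {K N p : ℕ} (hK : 1 ≤ K) (hN : 1 ≤ N)
    (H : Fin K → Fin N → (Fin p → ℝ)) (hG : globalMean H = 0)
    (STd : Matrix (Fin p) (Fin p) ℝ) (hSTd : IsMoorePenrose (SigmaT H) STd) :
    ∀ (W : Matrix (Fin K) (Fin p) ℝ) (b : Fin K → ℝ),
      mseLoss H
        ((K : ℝ)⁻¹ • ((∑ k, Matrix.of (fun (a : Fin K) (j : Fin p) =>
            (Pi.single k 1 : Fin K → ℝ) a * classMean H k j)) * STd))
        (fun _ => (K : ℝ)⁻¹)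
      ≤ mseLoss H W b :=
  mse_minimizer_general H hG STd hSTd
end
end

section
/- Let K ≥ 1, N ≥ 1 and let h_{k,i} ∈ ℝ^p for k = 1,…,K and i = 1,…,N be feature vectors. Then Tr[Σ_T† Σ_B] ≤ rank(Σ_B). Moreover, if the configuration is fully collapsed, i.e., h_{k,i} = μ_k for all k and i (equivalently Σ_W = 0), then Tr[Σ_T† Σ_B] = rank(Σ_B). -/
open Matrix Finset

noncomputable section

/-!
`Σ_T = Σ_W + Σ_B` with both summands positive semidefinite, so `Σ_B ≤ Σ_T` in the Loewner
order. Expanding the trace in an orthonormal eigenbasis `(v_j, λ_j)` of `Σ_B` gives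
`Tr[Σ_T† Σ_B] = ∑ λ_j v_jᵀ Σ_T† v_j`. With `x = Σ_T† v_j` the Penrose conditions give
`t := v_jᵀ Σ_T† v_j = xᵀ Σ_T x`, while `λ_j (v_jᵀ x)² ≤ xᵀ Σ_B x ≤ xᵀ Σ_T x`; hence `λ_j t² ≤ t`
and every term with `λ_j ≠ 0` is at most `1`. There are `rank Σ_B` such terms.

In the collapsed case `Σ_W = 0`, so `Σ_T† Σ_B = Σ_B† Σ_B` is an idempotent of the same rank as
`Σ_B`, and the trace of an idempotent is its rank.
-/

open scoped MatrixOrder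

namespace Matrix

variable {n : Type*} [Fintype n]

theorem PosSemidef.mul_sq_dotProduct_le {B : Matrix n n ℝ} (hB : B.PosSemidef) {v : n → ℝ}
    {c : ℝ} (hv : v ⬝ᵥ v = 1) (hBv : B *ᵥ v = c • v) (x : n → ℝ) :
    c * (v ⬝ᵥ x) ^ 2 ≤ x ⬝ᵥ B *ᵥ x := by
  have hvBx : v ⬝ᵥ B *ᵥ x = c * (v ⬝ᵥ x) := by
    rw [dotProduct_mulVec, ← mulVec_transpose, (isHermitian_iff_isSymm.mp hB.1).eq, hBv,
      smul_dotProduct, smul_eq_mul]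
  have hsq := hB.dotProduct_mulVec_nonneg (x - (v ⬝ᵥ x) • v)
  simp only [star_trivial, mulVec_sub, mulVec_smul, hBv, sub_dotProduct, dotProduct_sub,
    smul_dotProduct, dotProduct_smul, smul_eq_mul, hv, hvBx, dotProduct_comm x v] at hsq
  nlinarith [hsq]

variable [DecidableEq n]

theorem trace_eq_rank_of_isIdempotentElem {K : Type*} [Field K] {E : Matrix n n K}
    (hE : IsIdempotentElem E) : E.trace = E.rank := by
  have hE' : IsIdempotentElem (toLin' E) := hE.map toLinAlgEquiv'
  rw [← trace_toLin'_eq, (LinearMap.IsIdempotentElem.isProj_range _ hE').trace, rank,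
    toLin'_apply']

theorem trace_mul_eq_sum_eigenvalues_mul (S : Matrix n n ℝ) {B : Matrix n n ℝ}
    (hB : B.IsHermitian) :
    (S * B).trace = ∑ j, hB.eigenvalues j *
      ((hB.eigenvectorBasis j).ofLp ⬝ᵥ S *ᵥ (hB.eigenvectorBasis j).ofLp) := by
  have htrace : LinearMap.trace ℝ _ (toEuclideanLin (S * B)) = (S * B).trace := by
    rw [toEuclideanLin_eq_toLin_orthonormal, LinearMap.trace_eq_matrix_trace ℝ
      (EuclideanSpace.basisFun n ℝ).toBasis, LinearMap.toMatrix_toLin]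
  rw [← htrace, LinearMap.trace_eq_sum_inner _ hB.eigenvectorBasis]
  refine Finset.sum_congr rfl fun j _ => ?_
  rw [EuclideanSpace.inner_eq_star_dotProduct, toLpLin_apply, ← mulVec_mulVec,
    hB.mulVec_eigenvectorBasis, mulVec_smul, dotProduct_comm]
  simp

theorem IsHermitian.dotProduct_eigenvectorBasis_self {B : Matrix n n ℝ} (hB : B.IsHermitian)
    (j : n) : (hB.eigenvectorBasis j).ofLp ⬝ᵥ (hB.eigenvectorBasis j).ofLp = 1 := by
  have h := real_inner_self_eq_norm_sq (hB.eigenvectorBasis j)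
  rw [hB.eigenvectorBasis.orthonormal.1 j, EuclideanSpace.inner_eq_star_dotProduct] at h
  simpa using h

end Matrix

namespace IsMoorePenrose

variable {p : ℕ} {A S : Matrix (Fin p) (Fin p) ℝ}

theorem transpose (h : IsMoorePenrose A S) : IsMoorePenrose Aᵀ Sᵀ := by
  obtain ⟨h₁, h₂, h₃, h₄⟩ := h
  refine ⟨?_, ?_, ?_, ?_⟩
  · rw [← transpose_mul, ← transpose_mul, ← mul_assoc, h₁]
  · rw [← transpose_mul, ← transpose_mul, ← mul_assoc, h₂]
  · rw [← transpose_mul, h₄, h₄]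
  · rw [← transpose_mul, h₃, h₃]

theorem unique {S' : Matrix (Fin p) (Fin p) ℝ} (h : IsMoorePenrose A S)
    (h' : IsMoorePenrose A S') : S = S' := by
  obtain ⟨h₁, h₂, h₃, h₄⟩ := h
  obtain ⟨h₁', h₂', h₃', h₄'⟩ := h'
  have hAS : A * S = A * S' := by
    calc A * S = (A * S')ᵀ * (A * S)ᵀ := by rw [h₃', h₃, ← mul_assoc, h₁']
      _ = A * S' := by rw [← transpose_mul, ← mul_assoc, h₁, h₃']
  have hSA : S * A = S' * A := by
    calc S * A = (S * A)ᵀ * (S' * A)ᵀ := by rw [h₄, h₄', mul_assoc, ← mul_assoc A, h₁']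
      _ = S' * A := by rw [← transpose_mul, mul_assoc, ← mul_assoc A, h₁, h₄']
  calc S = S * A * S := h₂.symm
    _ = S' * A * S' := by rw [mul_assoc, hAS, ← mul_assoc, hSA]
    _ = S' := h₂'

theorem transpose_eq_self (hA : A.IsSymm) (h : IsMoorePenrose A S) : Sᵀ = S := by
  have h' := h.transpose
  rw [hA.eq] at h'
  exact h'.unique h

theorem mul_dotProduct_mulVec_le_one (hA : A.IsSymm) (h : IsMoorePenrose A S) {u : Fin p → ℝ}
    {c : ℝ} (hc : 0 ≤ c) (hu : ∀ x, c * (u ⬝ᵥ x) ^ 2 ≤ x ⬝ᵥ A *ᵥ x) :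
    c * (u ⬝ᵥ S *ᵥ u) ≤ 1 := by
  have hquad : (S *ᵥ u) ⬝ᵥ A *ᵥ (S *ᵥ u) = u ⬝ᵥ S *ᵥ u := by
    nth_rw 1 [← h.transpose_eq_self hA]
    rw [mulVec_transpose, ← dotProduct_mulVec, mulVec_mulVec, mulVec_mulVec, h.2.1]
  have := hu (S *ᵥ u)
  rw [hquad] at this
  nlinarith [sq_nonneg (u ⬝ᵥ S *ᵥ u)]

theorem trace_mul_eq_rank (h : IsMoorePenrose A S) : (S * A).trace = A.rank := by
  have hidem : IsIdempotentElem (S * A) := by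
    rw [IsIdempotentElem, ← mul_assoc, h.2.1]
  have hrank : (S * A).rank = A.rank := by
    refine le_antisymm (rank_mul_le_right S A) ?_
    calc A.rank = (A * (S * A)).rank := by rw [← mul_assoc, h.1]
      _ ≤ (S * A).rank := rank_mul_le_right A (S * A)
  rw [trace_eq_rank_of_isIdempotentElem hidem, hrank]

end IsMoorePenrose

theorem trace_mul_le_rank_of_isMoorePenrose {p : ℕ} {T B S : Matrix (Fin p) (Fin p) ℝ}
    (hB : B.PosSemidef) (hBT : B ≤ T) (hS : IsMoorePenrose T S) : (S * B).trace ≤ B.rank := by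
  have hT : T.IsSymm := by
    have := (hB.add (le_iff.mp hBT)).1
    rwa [add_sub_cancel, isHermitian_iff_isSymm] at this
  have hquad (x : Fin p → ℝ) : x ⬝ᵥ B *ᵥ x ≤ x ⬝ᵥ T *ᵥ x := by
    have := (le_iff.mp hBT).dotProduct_mulVec_nonneg x
    rwa [star_trivial, sub_mulVec, dotProduct_sub, sub_nonneg] at this
  rw [trace_mul_eq_sum_eigenvalues_mul S hB.1, hB.1.rank_eq_card_non_zero_eigs,
    Fintype.card_subtype, ← Finset.sum_boole]
  refine Finset.sum_le_sum fun j _ => ?_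
  split_ifs with hj
  · exact hS.mul_dotProduct_mulVec_le_one hT (hB.eigenvalues_nonneg j) fun x =>
      (hB.mul_sq_dotProduct_le (hB.1.dotProduct_eigenvectorBasis_self j)
        (hB.1.mulVec_eigenvectorBasis j) x).trans (hquad x)
  · rw [not_not.mp hj, zero_mul]

theorem Matrix.sum_vecMulVec_add_of_sum_eq_zero {ι n R : Type*} [Fintype ι] [CommRing R]
    {a : ι → n → R} (ha : ∑ i, a i = 0) (c : n → R) :
    ∑ i, vecMulVec (a i + c) (a i + c)
      = ∑ i, vecMulVec (a i) (a i) + Fintype.card ι • vecMulVec c c := by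
  ext r s
  have hr : ∑ i, a i r = 0 := by simpa using congrFun ha r
  have hs : ∑ i, a i s = 0 := by simpa using congrFun ha s
  simp only [Matrix.add_apply, Matrix.sum_apply, Matrix.smul_apply, vecMulVec_apply,
    Pi.add_apply, add_mul, mul_add, Finset.sum_add_distrib, ← Finset.sum_mul, ← Finset.mul_sum,
    hr, hs, Finset.sum_const, Finset.card_univ]
  ring

section Covariance

variable {K N p : ℕ} (H : Fin K → Fin N → (Fin p → ℝ))

theorem sum_sub_classMean (hN : N ≠ 0) (k : Fin K) : ∑ i, (H k i - classMean H k) = 0 := by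
  rw [Finset.sum_sub_distrib, Finset.sum_const, Finset.card_univ, Fintype.card_fin, classMean,
    ← Nat.cast_smul_eq_nsmul ℝ, smul_inv_smul₀ (Nat.cast_ne_zero.mpr hN), sub_self]

theorem sigmaT_eq_sigmaW_add_sigmaB : SigmaT H = SigmaW H + SigmaB H := by
  obtain rfl | hN := eq_or_ne N 0
  · simp [SigmaT, SigmaW, SigmaB, classMean, globalMean]
  have hdecomp (k : Fin K) : ∑ i, vecMulVec (H k i - globalMean H) (H k i - globalMean H)
      = ∑ i, vecMulVec (H k i - classMean H k) (H k i - classMean H k)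
        + (N : ℝ) • vecMulVec (classMean H k - globalMean H) (classMean H k - globalMean H) := by
    simp_rw [← sub_add_sub_cancel (H k _) (classMean H k) (globalMean H)]
    rw [sum_vecMulVec_add_of_sum_eq_zero (sum_sub_classMean H hN k), Fintype.card_fin,
      Nat.cast_smul_eq_nsmul]
  rw [SigmaT, SigmaW, SigmaB, Finset.sum_congr rfl fun k _ => hdecomp k, Finset.sum_add_distrib,
    ← Finset.smul_sum, smul_add, smul_smul, mul_inv, mul_assoc,
    inv_mul_cancel₀ (Nat.cast_ne_zero.mpr hN), mul_one]

theorem posSemidef_sigmaW : (SigmaW H).PosSemidef :=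
  .smul (posSemidef_sum _ fun _ _ => posSemidef_sum _ fun _ _ => posSemidef_vecMulVec_self_star _)
    (by positivity)

theorem posSemidef_sigmaB : (SigmaB H).PosSemidef :=
  .smul (posSemidef_sum _ fun _ _ => posSemidef_vecMulVec_self_star _) (by positivity)

theorem sigmaW_eq_zero_of_collapsed (hH : ∀ k i, H k i = classMean H k) : SigmaW H = 0 := by
  simp [SigmaW, sub_eq_zero.mpr (hH _ _)]

end Covariance

theorem trace_sigmaT_pinv_mul_sigmaB_le_rank_general {K N p : ℕ}
    (H : Fin K → Fin N → (Fin p → ℝ))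
    (STd : Matrix (Fin p) (Fin p) ℝ) (hSTd : IsMoorePenrose (SigmaT H) STd) :
    (STd * SigmaB H).trace ≤ ((SigmaB H).rank : ℝ) ∧
    ((∀ k i, H k i = classMean H k) → (STd * SigmaB H).trace = ((SigmaB H).rank : ℝ)) := by
  rw [sigmaT_eq_sigmaW_add_sigmaB] at hSTd
  refine ⟨trace_mul_le_rank_of_isMoorePenrose (posSemidef_sigmaB H) ?_ hSTd, fun hH => ?_⟩
  · exact le_add_of_nonneg_left (nonneg_iff_posSemidef.mpr (posSemidef_sigmaW H))
  · rw [sigmaW_eq_zero_of_collapsed H hH, zero_add] at hSTd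
    exact hSTd.trace_mul_eq_rank

/-- **Theorem 2.** `Tr[Σ_T† Σ_B] ≤ rank(Σ_B)`, with equality for fully collapsed
configurations (`h_{k,i} = μ_k` for all `k, i`). -/
theorem trace_sigmaT_pinv_mul_sigmaB_le_rank {K N p : ℕ} (hK : 1 ≤ K) (hN : 1 ≤ N)
    (H : Fin K → Fin N → (Fin p → ℝ))
    (STd : Matrix (Fin p) (Fin p) ℝ) (hSTd : IsMoorePenrose (SigmaT H) STd) :
    (STd * SigmaB H).trace ≤ ((SigmaB H).rank : ℝ) ∧
    ((∀ k i, H k i = classMean H k) → (STd * SigmaB H).trace = ((SigmaB H).rank : ℝ)) :=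
  trace_sigmaT_pinv_mul_sigmaB_le_rank_general H STd hSTd
end
end
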